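/- arXiv:2507.18306 — 8 statements merged into one kernel-verified Lean document; each statement's English description precedes it below -/
import Mathlib

section
/- For every integer n ≥ 2 and every integer k ≥ 2 with k ≥ n, the k-coalition number of the complete graph on n vertices satisfies C_k(K_n) = 2. -/
open SimpleGraph

/-- A set `S` is a `k`-dominating set of `G` if every vertex outside `S`
has at least `k` neighbors in `S`. -/
def KDominatingSet {V : Type*} (G : SimpleGraph V) (k : ℕ) (S : Set V) : Prop :=
  ∀ v ∉ S, k ≤ (S ∩ G.neighborSet v).ncard

/-- Two disjoint sets `A` and `B` form a `k`-coalition in `G` if neither is a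
`k`-dominating set of `G` but their union is. -/
def KCoalition {V : Type*} (G : SimpleGraph V) (k : ℕ) (A B : Set V) : Prop :=
  Disjoint A B ∧ ¬ KDominatingSet G k A ∧ ¬ KDominatingSet G k B ∧
    KDominatingSet G k (A ∪ B)

/-- A `k`-coalition partition of `G` is a partition of the vertex set in which every
part is either a `k`-dominating set of cardinality `k` or forms a `k`-coalition with
another part. -/
def KCoalitionPartition {V : Type*} (G : SimpleGraph V) (k : ℕ) (P : Finset (Set V)) : Prop :=
  (∀ A ∈ P, A.Nonempty) ∧
  (P : Set (Set V)).PairwiseDisjoint id ∧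
  (⋃ A ∈ P, A) = (Set.univ : Set V) ∧
  ∀ A ∈ P, (KDominatingSet G k A ∧ A.ncard = k) ∨
    ∃ B ∈ P, B ≠ A ∧ KCoalition G k A B

/-- The `k`-coalition number of `G`: the maximum cardinality of a
`k`-coalition partition of `G`. -/
noncomputable def kCoalitionNumber {V : Type*} (G : SimpleGraph V) (k : ℕ) : ℕ :=
  sSup {n | ∃ P : Finset (Set V), KCoalitionPartition G k P ∧ P.card = n}

theorem kCoalitionNumber_completeGraph_of_le (n k : ℕ) (hn : 2 ≤ n) (hk : 2 ≤ k)
    (hnk : n ≤ k) :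
    kCoalitionNumber (⊤ : SimpleGraph (Fin n)) k = 2 := by
  classical
  have hdom : ∀ S : Set (Fin n),
      KDominatingSet (⊤ : SimpleGraph (Fin n)) k S ↔ S = Set.univ := by
    intro S
    constructor
    · intro h
      by_contra hne
      obtain ⟨v, hv⟩ := (Set.ne_univ_iff_exists_notMem S).mp hne
      have hkle := h v hv
      have hvn : v ∉ S ∩ (⊤ : SimpleGraph (Fin n)).neighborSet v := by
        intro hmem
        exact (⊤ : SimpleGraph (Fin n)).irrefl hmem.2
      have h1 : (insert v (S ∩ (⊤ : SimpleGraph (Fin n)).neighborSet v)).ncard ≤ n := by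
        calc (insert v (S ∩ (⊤ : SimpleGraph (Fin n)).neighborSet v)).ncard
            ≤ (Set.univ : Set (Fin n)).ncard :=
              Set.ncard_le_ncard (Set.subset_univ _) Set.finite_univ
          _ = n := by rw [Set.ncard_univ, Nat.card_eq_fintype_card, Fintype.card_fin]
      rw [Set.ncard_insert_of_notMem hvn (Set.toFinite _)] at h1
      omega
    · intro h
      subst h
      intro v hv
      exact absurd (Set.mem_univ v) hv
  set z : Fin n := ⟨0, by omega⟩ with hz
  set o : Fin n := ⟨1, by omega⟩ with ho
  have one_ne : o ≠ z := by
    intro h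
    rw [ho, hz, Fin.mk.injEq] at h
    omega
  -- lower bound witness
  have h2 : 2 ∈ {m | ∃ P : Finset (Set (Fin n)),
      KCoalitionPartition (⊤ : SimpleGraph (Fin n)) k P ∧ P.card = m} := by
    set A : Set (Fin n) := {z} with hA
    set B : Set (Fin n) := Aᶜ with hB
    have hAB : A ≠ B := by
      intro h
      have h0 : z ∈ A := rfl
      rw [h] at h0
      exact h0 rfl
    refine ⟨{A, B}, ⟨?_, ?_, ?_, ?_⟩, ?_⟩
    · intro X hX
      rcases Finset.mem_insert.mp hX with h | h
      · exact ⟨z, h ▸ rfl⟩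
      · rw [Finset.mem_singleton.mp h]
        exact ⟨o, one_ne⟩
    · intro x hx y hy hxy
      simp only [Finset.coe_insert, Finset.coe_singleton, Set.mem_insert_iff,
        Set.mem_singleton_iff] at hx hy
      rcases hx with rfl | rfl <;> rcases hy with rfl | rfl
      · exact absurd rfl hxy
      · exact disjoint_compl_right
      · exact disjoint_compl_left
      · exact absurd rfl hxy
    · rw [Finset.set_biUnion_insert, Finset.set_biUnion_singleton, hB,
        Set.union_compl_self]
    · have hAnd : ¬ KDominatingSet (⊤ : SimpleGraph (Fin n)) k A := by
        rw [hdom]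
        intro h
        exact one_ne (Set.eq_univ_iff_forall.mp h o)
      have hBnd : ¬ KDominatingSet (⊤ : SimpleGraph (Fin n)) k B := by
        rw [hdom]
        intro h
        have : z ∈ B := h ▸ Set.mem_univ _
        exact this rfl
      have hUd : KDominatingSet (⊤ : SimpleGraph (Fin n)) k (A ∪ B) := by
        rw [hdom, hB]
        exact Set.union_compl_self A
      intro X hX
      rcases Finset.mem_insert.mp hX with rfl | h
      · right
        exact ⟨B, Finset.mem_insert_of_mem (Finset.mem_singleton_self _),
          hAB.symm, disjoint_compl_right, hAnd, hBnd, hUd⟩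
      · right
        rw [Finset.mem_singleton.mp h]
        refine ⟨A, Finset.mem_insert_self _ _, hAB, disjoint_compl_left, hBnd, hAnd, ?_⟩
        rw [hdom, hB]
        exact Set.compl_union_self A
    · rw [Finset.card_insert_of_notMem (by simpa using hAB), Finset.card_singleton]
  -- upper bound
  have hub : ∀ m ∈ {m | ∃ P : Finset (Set (Fin n)),
      KCoalitionPartition (⊤ : SimpleGraph (Fin n)) k P ∧ P.card = m}, m ≤ 2 := by
    rintro m ⟨P, ⟨hne, hdisj, huniv, hc⟩, rfl⟩
    by_contra h
    push_neg at h
    obtain ⟨A, hA⟩ : P.Nonempty := Finset.card_pos.mp (by omega)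
    rcases hc A hA with ⟨hdA, _⟩ | ⟨B, hB, hBA, hcoal⟩
    · rw [hdom] at hdA
      obtain ⟨C, hC, hCA⟩ : ∃ C ∈ P, C ≠ A := by
        by_contra hno
        push_neg at hno
        have hsub : P ⊆ {A} := fun x hx => Finset.mem_singleton.mpr (hno x hx)
        have hle := Finset.card_le_card hsub
        rw [Finset.card_singleton] at hle
        omega
      have hd := hdisj (Finset.mem_coe.mpr hC) (Finset.mem_coe.mpr hA) hCA
      obtain ⟨c, hcC⟩ := hne C hC
      exact Set.disjoint_left.mp hd hcC (hdA ▸ Set.mem_univ c)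
    · have hAB := hcoal.2.2.2
      rw [hdom] at hAB
      obtain ⟨C, hC, hCA, hCB⟩ : ∃ C ∈ P, C ≠ A ∧ C ≠ B := by
        by_contra hno
        push_neg at hno
        have hsub : P ⊆ {A, B} := by
          intro x hx
          by_cases hxA : x = A
          · exact Finset.mem_insert.mpr (Or.inl hxA)
          · exact Finset.mem_insert.mpr (Or.inr (Finset.mem_singleton.mpr (hno x hx hxA)))
        have h1 := Finset.card_le_card hsub
        have h2' : ({A, B} : Finset (Set (Fin n))).card ≤ 2 := by
          apply le_trans (Finset.card_insert_le _ _)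
          simp
        omega
      obtain ⟨c, hcC⟩ := hne C hC
      have hcu : c ∈ A ∪ B := hAB ▸ Set.mem_univ c
      rcases hcu with hcA | hcB
      · exact Set.disjoint_left.mp
          (hdisj (Finset.mem_coe.mpr hC) (Finset.mem_coe.mpr hA) hCA) hcC hcA
      · exact Set.disjoint_left.mp
          (hdisj (Finset.mem_coe.mpr hC) (Finset.mem_coe.mpr hB) hCB) hcC hcB
  exact le_antisymm (csSup_le ⟨2, h2⟩ hub) (le_csSup ⟨2, hub⟩ h2)
end

section
/- For all integers n and k with 2 ≤ k ≤ n − 1, the k-coalition number of the complete graph on n vertices satisfies C_k(K_n) = n − k + 2. -/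
open SimpleGraph

lemma kdom_iff (n k : ℕ) (hkn : k ≤ n) (S : Set (Fin n)) :
    KDominatingSet (⊤ : SimpleGraph (Fin n)) k S ↔ k ≤ S.ncard := by
  constructor
  · intro h
    by_cases hS : S = Set.univ
    · subst hS
      rw [Set.ncard_univ]
      simpa using hkn
    · obtain ⟨v, hv⟩ := Set.ne_univ_iff_exists_notMem S |>.mp hS
      exact (h v hv).trans (Set.ncard_le_ncard Set.inter_subset_left (Set.toFinite S))
  · intro h v hv
    have : S ∩ (⊤ : SimpleGraph (Fin n)).neighborSet v = S := by
      ext w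
      simp only [Set.mem_inter_iff, SimpleGraph.mem_neighborSet, SimpleGraph.top_adj]
      exact ⟨fun ⟨hw, _⟩ => hw, fun hw => ⟨hw, fun he => hv (he ▸ hw)⟩⟩
    rw [this]; exact h

lemma sum_ncard_of_pdisj {V : Type*} [Fintype V] (P : Finset (Set V))
    (hd : (P : Set (Set V)).PairwiseDisjoint id) :
    (⋃ A ∈ P, A).ncard = ∑ A ∈ P, A.ncard := by
  classical
  induction P using Finset.induction_on with
  | empty => simp
  | @insert A P' hA ih =>
    rw [Finset.sum_insert hA, Finset.set_biUnion_insert]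
    have hd' : ((P' : Set (Set V))).PairwiseDisjoint id :=
      hd.subset (Finset.coe_subset.mpr (Finset.subset_insert _ _))
    rw [← ih hd', Set.ncard_union_eq]
    · exact Set.disjoint_iUnion₂_right.mpr fun B hB =>
        hd (by simp) (by simp [hB]) (fun he => hA (he ▸ hB))

lemma coalition_upper (n k : ℕ) (hk : 2 ≤ k) (hkn : k + 1 ≤ n) (P : Finset (Set (Fin n)))
    (hP : KCoalitionPartition (⊤ : SimpleGraph (Fin n)) k P) : P.card + k ≤ n + 2 := by
  classical
  obtain ⟨hne, hdisj, hcov, hparts⟩ := hP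
  have hsum : ∑ A ∈ P, A.ncard = n := by
    rw [← sum_ncard_of_pdisj P hdisj, hcov, Set.ncard_univ, Nat.card_eq_fintype_card,
      Fintype.card_fin]
  have h1 : ∀ A ∈ P, 1 ≤ A.ncard := fun A hA =>
    Set.ncard_pos (Set.toFinite A) |>.mpr (hne A hA)
  by_cases hall : ∀ A ∈ P, A.ncard = k
  · have : ∑ A ∈ P, A.ncard = P.card * k := by
      rw [Finset.sum_congr rfl hall]; simp [mul_comm]
    have hn : n = P.card * k := by omega
    have hP1 : 1 ≤ P.card := by
      by_contra h
      have : P = ∅ := by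
        rw [Finset.card_eq_zero.symm]; omega
      rw [this] at hcov
      simp at hcov
      have : (0:ℕ) < n := by omega
      exact (Set.eq_empty_iff_forall_notMem.mp hcov.symm ⟨0, this⟩) trivial
    nlinarith
  · push_neg at hall
    obtain ⟨A, hA, hAk⟩ := hall
    have := hparts A hA
    rcases this with ⟨_, h⟩ | ⟨B, hB, hBA, _, hAnd, hBnd, hABd⟩
    · exact absurd h hAk
    have hkn' : k ≤ n := by omega
    rw [kdom_iff n k hkn'] at hAnd hBnd hABd
    push_neg at hAnd hBnd
    have hAB : k ≤ A.ncard + B.ncard :=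
      hABd.trans (Set.ncard_union_le A B)
    have hBA' : B ∈ P.erase A := Finset.mem_erase.mpr ⟨hBA, hB⟩
    have e1 : A.ncard + ∑ C ∈ P.erase A, C.ncard = ∑ C ∈ P, C.ncard :=
      Finset.add_sum_erase P _ hA
    have e2 : B.ncard + ∑ C ∈ (P.erase A).erase B, C.ncard = ∑ C ∈ P.erase A, C.ncard :=
      Finset.add_sum_erase _ _ hBA'
    have e3 : ((P.erase A).erase B).card ≤ ∑ C ∈ (P.erase A).erase B, C.ncard := by
      calc ((P.erase A).erase B).card = ∑ C ∈ (P.erase A).erase B, 1 := by simp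
      _ ≤ _ := Finset.sum_le_sum fun C hC => h1 C
            (Finset.mem_of_mem_erase (Finset.mem_of_mem_erase hC))
    have e4 : ((P.erase A).erase B).card = P.card - 2 := by
      rw [Finset.card_erase_of_mem hBA', Finset.card_erase_of_mem hA]
      omega
    have hP2 : 2 ≤ P.card := by
      have h2 := Finset.card_le_card (Finset.insert_subset hB (Finset.singleton_subset_iff.mpr hA))
      rwa [Finset.card_insert_of_notMem (by simp [hBA]), Finset.card_singleton] at h2
    omega

lemma coalition_construct (n k : ℕ) (hk : 2 ≤ k) (hkn : k + 1 ≤ n) :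
    ∃ P : Finset (Set (Fin n)), KCoalitionPartition (⊤ : SimpleGraph (Fin n)) k P ∧
      P.card = n - k + 2 := by
  classical
  have hkn' : k ≤ n := by omega
  have h1n : k - 1 < n := by omega
  set i0 : Fin n := ⟨k - 1, h1n⟩ with hi0
  set B : Set (Fin n) := Set.Iio i0 with hBdef
  have hmemB : ∀ v : Fin n, v ∈ B ↔ (v : ℕ) < k - 1 := fun v => by
    simp [hBdef, hi0, Fin.lt_def]
  have hBcard : B.ncard = k - 1 := by
    rw [hBdef, ← Finset.coe_Iio, Set.ncard_coe_finset, Fin.card_Iio]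
  set z : Fin n := ⟨0, by omega⟩ with hz
  have hzB : z ∈ B := (hmemB z).mpr (by simp [hz]; omega)
  set Q : Finset (Set (Fin n)) :=
    (Finset.Ici i0).image (fun v => ({v} : Set (Fin n))) with hQ
  have hmemQ : ∀ A, A ∈ Q ↔ ∃ v : Fin n, k - 1 ≤ (v : ℕ) ∧ A = {v} := by
    intro A
    simp only [hQ, Finset.mem_image, Finset.mem_Ici]
    constructor
    · rintro ⟨v, hv, rfl⟩; exact ⟨v, by simpa [Fin.le_def, hi0] using hv, rfl⟩
    · rintro ⟨v, hv, rfl⟩; exact ⟨v, by simpa [Fin.le_def, hi0] using hv, rfl⟩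
  have hBQ : B ∉ Q := by
    intro h
    obtain ⟨v, hv, hBv⟩ := (hmemQ B).mp h
    rw [hBv] at hzB
    have : (z : ℕ) = (v : ℕ) := by rw [hzB]
    simp [hz] at this
    omega
  set P : Finset (Set (Fin n)) := insert B Q with hP
  have hnotB : ¬ KDominatingSet (⊤ : SimpleGraph (Fin n)) k B := by
    rw [kdom_iff n k hkn', hBcard]; omega
  have hnotS : ∀ v : Fin n, ¬ KDominatingSet (⊤ : SimpleGraph (Fin n)) k {v} := by
    intro v
    rw [kdom_iff n k hkn', Set.ncard_singleton]; omega
  have hdomU : ∀ v : Fin n, v ∉ B → KDominatingSet (⊤ : SimpleGraph (Fin n)) k (B ∪ {v}) := by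
    intro v hv
    rw [kdom_iff n k hkn', Set.union_singleton,
      Set.ncard_insert_of_notMem hv (Set.toFinite B), hBcard]
    omega
  have hdisjBv : ∀ v : Fin n, k - 1 ≤ (v : ℕ) → Disjoint B ({v} : Set (Fin n)) := by
    intro v hv
    rw [Set.disjoint_singleton_right, hmemB]
    omega
  have hcoal : ∀ v : Fin n, k - 1 ≤ (v : ℕ) →
      KCoalition (⊤ : SimpleGraph (Fin n)) k B {v} := by
    intro v hv
    exact ⟨hdisjBv v hv, hnotB, hnotS v, hdomU v (by rw [hmemB]; omega)⟩
  refine ⟨P, ⟨?_, ?_, ?_, ?_⟩, ?_⟩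
  · intro A hA
    rw [hP, Finset.mem_insert] at hA
    rcases hA with rfl | hA
    · exact ⟨z, hzB⟩
    · obtain ⟨v, _, rfl⟩ := (hmemQ A).mp hA
      exact ⟨v, rfl⟩
  · intro X hX Y hY hXY
    simp only [hP, Finset.coe_insert, Set.mem_insert_iff, Finset.mem_coe] at hX hY
    have : ∀ A, A ∈ Q → ∃ v : Fin n, k - 1 ≤ (v : ℕ) ∧ A = {v} := fun A hA => (hmemQ A).mp hA
    rcases hX with rfl | hX
    · rcases hY with rfl | hY
      · exact absurd rfl hXY
      · obtain ⟨v, hv, rfl⟩ := this _ hY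
        exact hdisjBv v hv
    · obtain ⟨v, hv, rfl⟩ := this _ hX
      rcases hY with rfl | hY
      · exact (hdisjBv v hv).symm
      · obtain ⟨w, hw, rfl⟩ := this _ hY
        have hvw : v ≠ w := fun he => hXY (by rw [he])
        show Disjoint ({v} : Set (Fin n)) {w}
        simpa [Set.disjoint_singleton_left] using hvw
  · apply Set.eq_univ_of_forall
    intro v
    simp only [Set.mem_iUnion]
    by_cases hv : (v : ℕ) < k - 1
    · exact ⟨B, ⟨Finset.mem_insert_self _ _, (hmemB v).mpr hv⟩⟩
    · refine ⟨{v}, ⟨?_, rfl⟩⟩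
      rw [hP, Finset.mem_insert]
      exact Or.inr ((hmemQ _).mpr ⟨v, by omega, rfl⟩)
  · intro A hA
    rw [hP, Finset.mem_insert] at hA
    rcases hA with rfl | hA
    · right
      refine ⟨{i0}, ?_, ?_, hcoal i0 (by simp [hi0])⟩
      · rw [hP, Finset.mem_insert]
        exact Or.inr ((hmemQ _).mpr ⟨i0, by simp [hi0], rfl⟩)
      · intro he
        rw [← he] at hzB
        have : (z : ℕ) = (i0 : ℕ) := by rw [hzB]
        simp [hz, hi0] at this
        omega
    · right
      obtain ⟨v, hv, rfl⟩ := (hmemQ A).mp hA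
      refine ⟨B, Finset.mem_insert_self _ _, ?_, ?_⟩
      · intro he
        exact hBQ (he ▸ hA)
      · obtain ⟨hd, h1, h2, h3⟩ := hcoal v hv
        exact ⟨hd.symm, h2, h1, by rwa [Set.union_comm]⟩
  · rw [hP, Finset.card_insert_of_notMem hBQ, hQ,
      Finset.card_image_of_injective _ Set.singleton_injective, Fin.card_Ici]
    simp [hi0]
    omega

theorem kCoalitionNumber_completeGraph (n k : ℕ) (hk : 2 ≤ k) (hkn : k + 1 ≤ n) :
    kCoalitionNumber (⊤ : SimpleGraph (Fin n)) k = n - k + 2 := by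
  obtain ⟨P, hP, hcard⟩ := coalition_construct n k hk hkn
  have hmem : n - k + 2 ∈
      {m | ∃ P : Finset (Set (Fin n)),
        KCoalitionPartition (⊤ : SimpleGraph (Fin n)) k P ∧ P.card = m} :=
    ⟨P, hP, hcard⟩
  have hub : ∀ m ∈ {m | ∃ P : Finset (Set (Fin n)),
      KCoalitionPartition (⊤ : SimpleGraph (Fin n)) k P ∧ P.card = m}, m ≤ n - k + 2 := by
    rintro m ⟨P', hP', rfl⟩
    have := coalition_upper n k hk hkn P' hP'
    omega
  rw [kCoalitionNumber]
  exact le_antisymm (csSup_le ⟨_, hmem⟩ hub) (le_csSup ⟨_, hub⟩ hmem)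
end

section
/- For any finite simple graph G on n ≥ 2 vertices and any integer k ≥ 2, the k-coalition number satisfies C_k(G) ≥ δ(G) − k + 3, where δ(G) is the minimum degree of G. -/
/-!
Let `v` be a vertex of minimum degree `δ` and `T` a set of `t = δ + 1 - k` neighbours of `v`
(`t = 0` if `δ < k - 1`).
Partition the vertices into the singletons `{x}`, `x ∈ D := {v} ∪ T`, and the rest `B := Dᶜ`.
No singleton is `k`-dominating (`k ≥ 2`), and neither is `B`: `v` has only `δ - t = k - 1`
neighbours in it. But `{x} ∪ B` is the complement of the `t`-set `D \ {x}`, and a vertex of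
a `t`-set has at least `δ - (t - 1) = k` neighbours outside it. So every part forms a
`k`-coalition with another one, and the partition has `t + 2 = δ - k + 3` parts.
-/

open SimpleGraph

open Finset

theorem KCoalition.symm {V : Type*} {G : SimpleGraph V} {k : ℕ} {A B : Set V}
    (h : KCoalition G k A B) : KCoalition G k B A :=
  ⟨h.1.symm, h.2.2.1, h.2.1, Set.union_comm A B ▸ h.2.2.2⟩

namespace SimpleGraph

variable {V : Type*} (G : SimpleGraph V) {k : ℕ}

theorem not_kDominatingSet_of_ncard_lt {S : Set V} (hS : S.Finite) (hk : S.ncard < k)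
    {w : V} (hw : w ∉ S) : ¬ KDominatingSet G k S := fun hdom =>
  (hdom w hw).not_gt (hk.trans_le' (Set.ncard_inter_le_ncard_left _ _ hS))

theorem not_kDominatingSet_singleton [Fintype V] (hV : 2 ≤ Fintype.card V) (hk : 2 ≤ k)
    (x : V) : ¬ KDominatingSet G k {x} := by
  obtain ⟨w, hw⟩ := Fintype.exists_ne_of_one_lt_card hV x
  exact G.not_kDominatingSet_of_ncard_lt (Set.finite_singleton x)
    (by rw [Set.ncard_singleton]; omega) (Set.mem_singleton_iff.not.mpr hw)

section Fintype

variable [Fintype V] [DecidableEq V] [DecidableRel G.Adj]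

theorem ncard_compl_inter_neighborSet (C : Finset V) (u : V) :
    ((C : Set V)ᶜ ∩ G.neighborSet u).ncard = #(G.neighborFinset u \ C) := by
  rw [← Set.ncard_coe_finset]
  congr 1
  ext x
  simp [and_comm]

theorem kDominatingSet_compl {C : Finset V}
    (hC : ∀ u ∈ C, k + #C ≤ G.degree u + 1) : KDominatingSet G k (C : Set V)ᶜ := by
  intro u hu
  have huC : u ∈ C := by simpa using hu
  have hsdiff : G.neighborFinset u \ C = G.neighborFinset u \ C.erase u := by
    ext x
    simp only [mem_sdiff, mem_erase, mem_neighborFinset]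
    exact ⟨fun h => ⟨h.1, fun h' => h.2 h'.2⟩,
      fun h => ⟨h.1, fun h' => h.2 ⟨G.ne_of_adj h.1 |>.symm, h'⟩⟩⟩
  rw [G.ncard_compl_inter_neighborSet, hsdiff]
  have := le_card_sdiff (C.erase u) (G.neighborFinset u)
  rw [card_neighborFinset_eq_degree, card_erase_of_mem huC] at this
  have := hC u huC
  have := card_pos.mpr ⟨u, huC⟩
  omega

theorem not_kDominatingSet_compl_insert {v : V} {T : Finset V}
    (hT : T ⊆ G.neighborFinset v)
    (hdeg : G.degree v < k + #T) : ¬ KDominatingSet G k (insert v T : Finset V)ᶜ := by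
  intro hdom
  have hv := hdom v (by simp)
  have hsdiff : G.neighborFinset v \ insert v T = G.neighborFinset v \ T := by
    ext x
    simp only [mem_sdiff, mem_insert, mem_neighborFinset, not_or]
    exact ⟨fun h => ⟨h.1, h.2.2⟩, fun h => ⟨h.1, G.ne_of_adj h.1 |>.symm, h.2⟩⟩
  rw [G.ncard_compl_inter_neighborSet, hsdiff, card_sdiff_of_subset hT,
    card_neighborFinset_eq_degree] at hv
  have := card_le_card hT
  rw [card_neighborFinset_eq_degree] at this
  omega

end Fintype

theorem card_le_kCoalitionNumber [Finite V] {P : Finset (Set V)}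
    (hP : KCoalitionPartition G k P) : #P ≤ kCoalitionNumber G k := by
  have : Fintype (Set V) := Fintype.ofFinite _
  refine le_csSup ⟨Fintype.card (Set V), ?_⟩ ⟨P, hP, rfl⟩
  rintro n ⟨Q, -, rfl⟩
  exact card_le_univ Q

theorem exists_kCoalitionPartition_singletons_compl [DecidableEq V] {D : Finset V}
    (hD : D.Nonempty) {w : V} (hw : w ∉ D) (hcompl : ¬ KDominatingSet G k (D : Set V)ᶜ)
    (hsingle : ∀ x ∈ D, ¬ KDominatingSet G k {x})
    (herase : ∀ x ∈ D, KDominatingSet G k (D.erase x : Set V)ᶜ) :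
    ∃ P, KCoalitionPartition G k P ∧ #P = #D + 1 := by
  set B : Set V := (D : Set V)ᶜ
  have hB_ne : ∀ x ∈ D, B ≠ {x} := fun x hx hBx =>
    hw (by rwa [Set.eq_singleton_iff_unique_mem.mp hBx |>.2 w hw])
  have hB_disj : ∀ x ∈ D, Disjoint {x} B := fun x hx => by simpa [B] using hx
  have hunion : ∀ x ∈ D, {x} ∪ B = (D.erase x : Set V)ᶜ := fun x hx => by
    ext y; by_cases y = x <;> simp_all [B]
  have hcoal : ∀ x ∈ D, KCoalition G k {x} B := fun x hx =>
    ⟨hB_disj x hx, hsingle x hx, hcompl, hunion x hx ▸ herase x hx⟩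
  refine ⟨insert B (D.image fun x => {x}), ⟨?_, ?_, ?_, ?_⟩, ?_⟩
  · simp only [mem_insert, mem_image, forall_eq_or_imp, forall_exists_index, and_imp,
      forall_apply_eq_imp_iff₂]
    exact ⟨⟨w, by simpa [B] using hw⟩, fun x _ => Set.singleton_nonempty x⟩
  · rw [coe_insert, coe_image]
    refine Set.PairwiseDisjoint.insert ?_ ?_
    · rintro _ ⟨x, -, rfl⟩ _ ⟨y, -, rfl⟩ hxy
      exact Set.disjoint_singleton.mpr (ne_of_apply_ne _ hxy)
    · rintro _ ⟨x, hx, rfl⟩ -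
      exact (hB_disj x hx).symm
  · refine Set.eq_univ_of_forall fun y => ?_
    by_cases hy : y ∈ D
    · exact Set.mem_biUnion (mem_insert_of_mem (mem_image_of_mem _ hy)) rfl
    · exact Set.mem_biUnion (mem_insert_self _ _) hy
  · simp only [mem_insert, mem_image, forall_eq_or_imp, forall_exists_index, and_imp,
      forall_apply_eq_imp_iff₂]
    obtain ⟨x, hx⟩ := hD
    exact ⟨Or.inr ⟨{x}, Or.inr ⟨x, hx, rfl⟩, (hB_ne x hx).symm, (hcoal x hx).symm⟩,
      fun x hx => Or.inr ⟨B, Or.inl rfl, hB_ne x hx, hcoal x hx⟩⟩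
  · rw [card_insert_of_notMem, card_image_of_injective _ Set.singleton_injective]
    simp only [mem_image, not_exists, not_and]
    exact fun x hx h => hB_ne x hx h.symm

end SimpleGraph

theorem kCoalitionNumber_ge_minDegree {V : Type*} [Fintype V] (G : SimpleGraph V)
    [DecidableRel G.Adj] (hn : 2 ≤ Fintype.card V) (k : ℕ) (hk : 2 ≤ k) :
    (G.minDegree : ℤ) - k + 3 ≤ (kCoalitionNumber G k : ℤ) := by
  classical
  have : Nonempty V := Fintype.card_pos_iff.mp (by omega)
  obtain ⟨v, hv⟩ := G.exists_minimal_degree_vertex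
  have hmin (u : V) : G.degree v ≤ G.degree u := hv ▸ G.minDegree_le_degree u
  obtain ⟨T, hTv, hT⟩ := exists_subset_card_eq (s := G.neighborFinset v)
    (n := G.degree v + 1 - k) (by rw [card_neighborFinset_eq_degree]; omega)
  have hvT : v ∉ T := fun h => G.notMem_neighborFinset_self v (hTv h)
  set D := insert v T
  have hD : #D = G.degree v + 1 - k + 1 := by rw [card_insert_of_notMem hvT, hT]
  obtain ⟨w, -, hw⟩ := exists_mem_notMem_of_card_lt_card (s := D) (t := univ)
    (by rw [hD, card_univ]; have := G.degree_lt_card_verts v; omega)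
  have herase (x : V) (hx : x ∈ D) : KDominatingSet G k (D.erase x : Set V)ᶜ :=
    G.kDominatingSet_compl fun u hu => by
      have := card_pos.mpr ⟨u, hu⟩
      rw [card_erase_of_mem hx, hD] at this ⊢
      have := hmin u
      omega
  obtain ⟨P, hP, hPcard⟩ := G.exists_kCoalitionPartition_singletons_compl (insert_nonempty v T)
    hw (G.not_kDominatingSet_compl_insert hTv (by omega))
    (fun x _ => G.not_kDominatingSet_singleton hn hk x) herase
  have := G.card_le_kCoalitionNumber hP
  rw [hPcard, hD] at this
  omega
end

section
/- Let G be a finite simple graph on at least two vertices, let k ≥ 1 be an integer, and let Θ be a k-coalition partition of G of maximum cardinality. Then every set A ∈ Θ forms a k-coalition with at most max{1, Δ(G) − k + 2} sets in Θ, where Δ(G) is the maximum degree of G. -/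
open SimpleGraph

open scoped Classical in
theorem kCoalition_partners_le {V : Type*} [Fintype V] (G : SimpleGraph V)
    [DecidableRel G.Adj] (hn : 2 ≤ Fintype.card V) (k : ℕ) (hk : 1 ≤ k)
    (Θ : Finset (Set V)) (hΘ : KCoalitionPartition G k Θ)
    (hmax : Θ.card = kCoalitionNumber G k) (A : Set V) (hA : A ∈ Θ) :
    ((Θ.filter fun B => KCoalition G k A B).card : ℤ) ≤
      max 1 ((G.maxDegree : ℤ) - k + 2) := by
  classical
  by_cases hdom : KDominatingSet G k A
  · have hF : Θ.filter (fun B => KCoalition G k A B) = ∅ := by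
      rw [Finset.filter_eq_empty_iff]
      intro B _ hB
      exact hB.2.1 hdom
    rw [hF]
    simp only [Finset.card_empty, Nat.cast_zero]
    exact le_max_of_le_left zero_le_one
  · rw [KDominatingSet] at hdom
    push_neg at hdom
    obtain ⟨v, hv, hvk⟩ := hdom
    set nb := G.neighborSet v with hnb
    set F := Θ.filter (fun B => KCoalition G k A B) with hFdef
    set F₁ := F.filter (fun B => v ∈ B) with hF1
    set F₂ := F.filter (fun B => v ∉ B) with hF2
    set a := (A ∩ nb).ncard with ha
    have hmemΘ : ∀ B ∈ F, B ∈ Θ := fun B hB => Finset.mem_of_mem_filter _ hB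
    have hco : ∀ B ∈ F, KCoalition G k A B := fun B hB => (Finset.mem_filter.mp hB).2
    -- F₁ has at most one element
    have h1 : F₁.card ≤ 1 := by
      rw [Finset.card_le_one]
      intro B hB B' hB'
      by_contra hne
      have hBv : v ∈ B := (Finset.mem_filter.mp hB).2
      have hB'v : v ∈ B' := (Finset.mem_filter.mp hB').2
      have hd := hΘ.2.1 (Finset.mem_coe.mpr (hmemΘ B (Finset.mem_of_mem_filter _ hB)))
        (Finset.mem_coe.mpr (hmemΘ B' (Finset.mem_of_mem_filter _ hB'))) hne
      exact Set.disjoint_left.mp hd hBv hB'v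
    -- per-element bound for F₂
    have key : ∀ B ∈ F₂, k ≤ a + (B ∩ nb).toFinset.card := by
      intro B hB
      have hcoB := hco B (Finset.mem_of_mem_filter _ hB)
      have hvB : v ∉ B := by
        have := (Finset.mem_filter.mp hB).2
        simpa using this
      have hdomAB := hcoB.2.2.2
      have hvAB : v ∉ A ∪ B := by
        intro h; rcases h with h | h
        exacts [hv h, hvB h]
      have hkb := hdomAB v hvAB
      have hsplit : (A ∪ B) ∩ nb = (A ∩ nb) ∪ (B ∩ nb) := Set.union_inter_distrib_right A B nb
      rw [hsplit] at hkb
      have hle : ((A ∩ nb) ∪ (B ∩ nb)).ncard ≤ (A ∩ nb).ncard + (B ∩ nb).ncard :=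
        Set.ncard_union_le _ _
      have := le_trans hkb hle
      rwa [Set.ncard_eq_toFinset_card' (B ∩ nb)] at this
    -- pairwise disjointness of the neighbor pieces
    have hdisjt : ∀ B ∈ F₂, ∀ B' ∈ F₂, B ≠ B' →
        Disjoint (B ∩ nb).toFinset (B' ∩ nb).toFinset := by
      intro B hB B' hB' hne
      rw [Set.disjoint_toFinset]
      have hd := hΘ.2.1 (Finset.mem_coe.mpr (hmemΘ B (Finset.mem_of_mem_filter _ hB)))
        (Finset.mem_coe.mpr (hmemΘ B' (Finset.mem_of_mem_filter _ hB'))) hne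
      exact (hd.mono Set.inter_subset_left Set.inter_subset_left)
    -- they live inside nb \ A
    have hsub : ∀ B ∈ F₂, (B ∩ nb).toFinset ⊆ (nb \ A).toFinset := by
      intro B hB
      rw [Set.toFinset_subset_toFinset]
      intro x hx
      refine ⟨hx.2, fun hxA => ?_⟩
      have hdAB := (hco B (Finset.mem_of_mem_filter _ hB)).1
      exact Set.disjoint_left.mp hdAB hxA hx.1
    -- counting
    have hsum : F₂.card * (k - a) ≤ ((nb \ A).toFinset).card := by
      calc F₂.card * (k - a) = F₂.card • (k - a) := by rw [smul_eq_mul]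
        _ ≤ ∑ B ∈ F₂, (B ∩ nb).toFinset.card := by
            apply Finset.card_nsmul_le_sum
            intro B hB
            have := key B hB
            omega
        _ = (F₂.biUnion (fun B => (B ∩ nb).toFinset)).card :=
            (Finset.card_biUnion hdisjt).symm
        _ ≤ ((nb \ A).toFinset).card :=
            Finset.card_le_card (Finset.biUnion_subset.mpr hsub)
    -- degree bound
    have hdeg : a + ((nb \ A).toFinset).card ≤ G.maxDegree := by
      have hu : (A ∩ nb).toFinset ∪ (nb \ A).toFinset = G.neighborFinset v := by
        ext x
        simp only [Finset.mem_union, Set.mem_toFinset, Set.mem_inter_iff, Set.mem_diff,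
          mem_neighborFinset, hnb, Set.mem_setOf_eq]
        constructor
        · rintro (⟨_, h⟩ | ⟨h, _⟩) <;> exact h
        · intro h; by_cases hxA : x ∈ A
          · exact Or.inl ⟨hxA, h⟩
          · exact Or.inr ⟨h, hxA⟩
      have hd : Disjoint (A ∩ nb).toFinset ((nb \ A).toFinset) := by
        rw [Set.disjoint_toFinset]
        exact Set.disjoint_left.mpr (fun x hx hx' => hx'.2 hx.1)
      have hcard : a + ((nb \ A).toFinset).card = (G.neighborFinset v).card := by
        rw [← hu, Finset.card_union_of_disjoint hd, ha,
          Set.ncard_eq_toFinset_card' (A ∩ nb)]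
      rw [hcard]
      exact G.degree_le_maxDegree v
    -- combine
    have hFsplit : F₁.card + F₂.card = F.card :=
      Finset.card_filter_add_card_filter_not (fun B => v ∈ B)
    have hak : a < k := hvk
    rcases Nat.eq_zero_or_pos F₂.card with hc0 | hc1
    · have : F.card ≤ 1 := by omega
      calc (F.card : ℤ) ≤ 1 := by exact_mod_cast this
        _ ≤ max 1 ((G.maxDegree : ℤ) - k + 2) := le_max_left _ _
    · have hZ : (F.card : ℤ) ≤ (G.maxDegree : ℤ) - k + 2 := by
        have hsum' : (F₂.card : ℤ) * ((k : ℤ) - a) ≤ ((nb \ A).toFinset.card : ℤ) := by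
          have : ((F₂.card * (k - a) : ℕ) : ℤ) ≤ ((nb \ A).toFinset.card : ℤ) :=
            Int.ofNat_le.mpr hsum
          push_cast [Nat.cast_sub hak.le] at this
          linarith
        have hdeg' : (a : ℤ) + ((nb \ A).toFinset.card : ℤ) ≤ (G.maxDegree : ℤ) := by
          exact_mod_cast hdeg
        have h1' : (F₁.card : ℤ) ≤ 1 := by exact_mod_cast h1
        have hc1' : (1 : ℤ) ≤ F₂.card := by exact_mod_cast hc1
        have hak' : (a : ℤ) + 1 ≤ k := by exact_mod_cast hak
        have hFsplit' : (F₁.card : ℤ) + F₂.card = F.card := by exact_mod_cast hFsplit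
        nlinarith [mul_nonneg (by linarith : (0:ℤ) ≤ (F₂.card : ℤ) - 1)
          (by linarith : (0:ℤ) ≤ (k : ℤ) - a - 1)]
      exact le_trans hZ (le_max_right _ _)
end

section
/- If T is a tree of order n ≥ 2, then the 2-coalition number satisfies C_2(T) ≤ ⌊n/2⌋ + 1. -/
open SimpleGraph

/-!
A tree on `n ≥ 2` vertices has two leaves, and a leaf lies in every 2-dominating set, so the part
containing a leaf is the partner of every other part. If the two leaves lie in different parts,
there are no other parts. Otherwise let `A` be the part containing both and `B₁, …, Bₜ` the other
parts; then every `A ∪ Bᵢ` is 2-dominating. For `t ≥ 3`, count the edges leaving the sets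
`A ∪ Bᵢ`: each vertex `x ∉ A` sends at least two edges into `A ∪ Bᵢ` for each of the `t - 1`
parts `Bᵢ` not containing `x`, while each edge leaves at most `t - 1` of these sets. Hence `2 (t - 1) |V \ A| ≤ (t - 1) (n - 1)`, so `t ≤ |V \ A| ≤ (n - 1) / 2`.
-/

open Finset

namespace KDominatingSet

variable {V : Type*} {G : SimpleGraph V} {k : ℕ} {S : Set V}

lemma le_card_filter_neighborFinset (hS : KDominatingSet G k S) {v : V}
    [Fintype (G.neighborSet v)] [DecidablePred (· ∈ S)] (hv : v ∉ S) :
    k ≤ #{w ∈ G.neighborFinset v | w ∈ S} := by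
  have hset : S ∩ G.neighborSet v = ↑{w ∈ G.neighborFinset v | w ∈ S} := by
    ext w
    simp [and_comm]
  have hk := hS v hv
  rwa [hset, Set.ncard_coe_finset] at hk

lemma mem_of_degree_lt (hS : KDominatingSet G k S) {v : V} [Fintype (G.neighborSet v)]
    (hv : G.degree v < k) : v ∈ S := by
  classical
  by_contra hvS
  exact hv.not_ge <| (hS.le_card_filter_neighborFinset hvS).trans (card_filter_le _ _)

end KDominatingSet

namespace KCoalitionPartition

variable {V : Type*} {G : SimpleGraph V} {k : ℕ} {P : Finset (Set V)}

lemma exists_part (hP : KCoalitionPartition G k P) :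
    ∃ part : V → Set V, ∀ x, part x ∈ P ∧ ∀ C ∈ P, x ∈ C ↔ part x = C := by
  have hcov : ∀ x, ∃ C ∈ P, x ∈ C := fun x => by
    have hx : x ∈ ⋃ C ∈ P, C := hP.2.2.1 ▸ Set.mem_univ x
    simpa using hx
  choose part hpart hmem using hcov
  exact ⟨part, fun x => ⟨hpart x, fun C hC =>
    ⟨fun hx => hP.2.1.elim_set (hpart x) hC x (hmem x) hx, fun h => h ▸ hmem x⟩⟩⟩

lemma kDominatingSet_union (hP : KCoalitionPartition G k P) {v : V}
    (hv : ∀ S, KDominatingSet G k S → v ∈ S) {A B : Set V} (hA : A ∈ P) (hvA : v ∈ A)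
    (hB : B ∈ P) (hBA : B ≠ A) : KDominatingSet G k (A ∪ B) := by
  have hvB : v ∉ B := fun hvB => hBA (hP.2.1.elim_set hB hA v hvB hvA)
  rcases hP.2.2.2 B hB with ⟨hdom, -⟩ | ⟨D, hD, -, -, -, -, hdom⟩
  · exact absurd (hv B hdom) hvB
  · obtain rfl : D = A := hP.2.1.elim_set hD hA v ((hv _ hdom).resolve_left hvB) hvA
    rwa [Set.union_comm] at hdom

lemma subset_pair_of_forall_mem (hP : KCoalitionPartition G k P) {v w : V}
    (hv : ∀ S, KDominatingSet G k S → v ∈ S) (hw : ∀ S, KDominatingSet G k S → w ∈ S)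
    {A A' : Set V} (hA : A ∈ P) (hvA : v ∈ A) (hA' : A' ∈ P) (hwA' : w ∈ A') (hwA : w ∉ A) :
    P ⊆ {A, A'} := by
  intro C hC
  rw [mem_insert, mem_singleton, or_iff_not_imp_left]
  intro hCA
  have hwC : w ∈ C := (hw _ (hP.kDominatingSet_union hv hA hvA hC hCA)).resolve_left hwA
  exact hP.2.1.elim_set hC hA' w hwC hwA'

end KCoalitionPartition

section SeparatingCount

/- A colouring `c` stands for a partition of the vertices: `a` is the class of one distinguished
part and `Q` holds the classes of the others. -/

variable {V ι : Type*} [DecidableEq ι] {c : V → ι} {a : ι} {Q : Finset ι}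

def separatingCount (c : V → ι) (a : ι) (Q : Finset ι) (x y : V) : ℕ :=
  #{b ∈ Q | ¬(c x = a ∨ c x = b) ∧ (c y = a ∨ c y = b)}

lemma separatingCount_of_eq {x : V} (hx : c x = a) (y : V) : separatingCount c a Q x y = 0 := by
  simp [separatingCount, hx]

lemma separatingCount_le_one {x y : V} (hy : c y ≠ a) : separatingCount c a Q x y ≤ 1 := by
  refine (card_le_card fun b hb => ?_).trans (card_singleton (c y)).le
  simp only [mem_filter] at hb
  simpa [hy, eq_comm] using hb.2.2

lemma separatingCount_le_card_sub_one (hc : ∀ x, c x = a ∨ c x ∈ Q) {x : V} (hx : c x ≠ a)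
    (y : V) : separatingCount c a Q x y ≤ #Q - 1 := by
  rw [← card_erase_of_mem ((hc x).resolve_left hx)]
  refine card_le_card fun b hb => ?_
  simp only [mem_filter] at hb
  exact mem_erase.2 ⟨fun h => hb.2.1 (Or.inr h.symm), hb.1⟩

/-- If the edge `xy` meets the class of `a`, then `b` must avoid the class of its other end;
otherwise `b` is the class of one of its ends, and `2 ≤ #Q - 1`. -/
lemma separatingCount_add_le (hc : ∀ x, c x = a ∨ c x ∈ Q) (hQ : 3 ≤ #Q) (x y : V) :
    separatingCount c a Q x y + separatingCount c a Q y x ≤ #Q - 1 := by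
  by_cases hx : c x = a
  · rw [separatingCount_of_eq hx, zero_add]
    by_cases hy : c y = a
    · rw [separatingCount_of_eq hy]; omega
    · exact separatingCount_le_card_sub_one hc hy x
  · by_cases hy : c y = a
    · rw [separatingCount_of_eq hy, add_zero]
      exact separatingCount_le_card_sub_one hc hx y
    · have := separatingCount_le_one (Q := Q) (x := x) hy
      have := separatingCount_le_one (Q := Q) (x := y) hx
      omega

variable [Fintype V] {G : SimpleGraph V} [DecidableRel G.Adj]

lemma sum_separatingCount_le (hc : ∀ x, c x = a ∨ c x ∈ Q) (hQ : 3 ≤ #Q) :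
    ∑ x, ∑ y ∈ G.neighborFinset x, separatingCount c a Q x y ≤ (#Q - 1) * #G.edgeFinset := by
  have hswap : ∑ x, ∑ y ∈ G.neighborFinset x, separatingCount c a Q x y =
      ∑ x, ∑ y ∈ G.neighborFinset x, separatingCount c a Q y x :=
    sum_comm' (by simp [adj_comm])
  have hdouble : 2 * ∑ x, ∑ y ∈ G.neighborFinset x, separatingCount c a Q x y ≤
      2 * ((#Q - 1) * #G.edgeFinset) := calc
    _ = ∑ x, ∑ y ∈ G.neighborFinset x,
          (separatingCount c a Q x y + separatingCount c a Q y x) := by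
      rw [two_mul]
      nth_rewrite 2 [hswap]
      simp only [← sum_add_distrib]
    _ ≤ ∑ x, ∑ _y ∈ G.neighborFinset x, (#Q - 1) :=
      sum_le_sum fun x _ => sum_le_sum fun y _ => separatingCount_add_le hc hQ x y
    _ = (#Q - 1) * ∑ x, G.degree x := by simp [card_neighborFinset_eq_degree, mul_sum, mul_comm]
    _ = 2 * ((#Q - 1) * #G.edgeFinset) := by rw [sum_degrees_eq_twice_card_edges]; ring
  omega

lemma mul_card_sub_one_le_sum_separatingCount {k : ℕ}
    (hdom : ∀ b ∈ Q, KDominatingSet G k {x | c x = a ∨ c x = b}) (hc : ∀ x, c x = a ∨ c x ∈ Q)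
    {x : V} (hx : c x ≠ a) :
    k * (#Q - 1) ≤ ∑ y ∈ G.neighborFinset x, separatingCount c a Q x y := by
  classical
  have hcx : c x ∈ Q := (hc x).resolve_left hx
  calc k * (#Q - 1) = ∑ _b ∈ Q.erase (c x), k := by
        rw [sum_const, card_erase_of_mem hcx, smul_eq_mul, mul_comm]
    _ ≤ ∑ b ∈ Q.erase (c x),
          #{y ∈ G.neighborFinset x | ¬(c x = a ∨ c x = b) ∧ (c y = a ∨ c y = b)} := by
      refine sum_le_sum fun b hb => ?_
      have hxb : ¬(c x = a ∨ c x = b) := by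
        rintro (h | h)
        exacts [hx h, (mem_erase.1 hb).1 h.symm]
      simpa [hxb] using
        (hdom b (mem_of_mem_erase hb)).le_card_filter_neighborFinset (v := x) hxb
    _ ≤ ∑ b ∈ Q, #{y ∈ G.neighborFinset x | ¬(c x = a ∨ c x = b) ∧ (c y = a ∨ c y = b)} :=
      sum_le_sum_of_subset (erase_subset _ _)
    _ = ∑ y ∈ G.neighborFinset x, separatingCount c a Q x y := by
      simp only [separatingCount, card_filter]
      exact sum_comm

theorem mul_card_le_card_edgeFinset {k : ℕ}
    (hdom : ∀ b ∈ Q, KDominatingSet G k {x | c x = a ∨ c x = b}) (hc : ∀ x, c x = a ∨ c x ∈ Q)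
    (hQ : 3 ≤ #Q) : k * #{x | c x ≠ a} ≤ #G.edgeFinset := by
  have hmul : (#Q - 1) * (k * #{x | c x ≠ a}) ≤ (#Q - 1) * #G.edgeFinset := calc
    _ = ∑ x with c x ≠ a, k * (#Q - 1) := by rw [sum_const, smul_eq_mul]; ring
    _ ≤ ∑ x with c x ≠ a, ∑ y ∈ G.neighborFinset x, separatingCount c a Q x y :=
      sum_le_sum fun x hx => mul_card_sub_one_le_sum_separatingCount hdom hc (mem_filter.1 hx).2
    _ ≤ ∑ x, ∑ y ∈ G.neighborFinset x, separatingCount c a Q x y :=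
      sum_le_sum_of_subset (filter_subset _ _)
    _ ≤ (#Q - 1) * #G.edgeFinset := sum_separatingCount_le hc hQ
  exact Nat.le_of_mul_le_mul_left hmul (by omega)

end SeparatingCount

namespace KCoalitionPartition

variable {V : Type*} [Fintype V] {T : SimpleGraph V} {P : Finset (Set V)}

lemma card_le_of_isTree_of_two_le_ncard (hT : T.IsTree) (hP : KCoalitionPartition T 2 P)
    {v : V} (hv : ∀ S, KDominatingSet T 2 S → v ∈ S) {A : Set V} (hA : A ∈ P) (hvA : v ∈ A)
    (hA2 : 2 ≤ A.ncard) : #P ≤ Fintype.card V / 2 + 1 := by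
  classical
  obtain ⟨part, hpart⟩ := hP.exists_part
  have hclass : ∀ B ∈ P, {x | part x = B} = B := fun B hB => by
    ext x
    exact ((hpart x).2 B hB).symm
  have hc : ∀ x, part x = A ∨ part x ∈ P.erase A := fun x => by
    rw [mem_erase]
    have := (hpart x).1
    tauto
  have hdom : ∀ B ∈ P.erase A, KDominatingSet T 2 {x | part x = A ∨ part x = B} := by
    intro B hB
    rw [Set.ofPred_or, hclass A hA, hclass B (mem_of_mem_erase hB)]
    exact hP.kDominatingSet_union hv hA hvA (mem_of_mem_erase hB) (ne_of_mem_erase hB)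
  have hQS : #(P.erase A) ≤ #{x | part x ≠ A} := by
    refine card_le_card_of_surjOn part fun B hB => ?_
    obtain ⟨x, hx⟩ := hP.1 B (mem_of_mem_erase hB)
    have hxB : part x = B := ((hpart x).2 B (mem_of_mem_erase hB)).1 hx
    exact ⟨x, by simp [hxB, ne_of_mem_erase hB], hxB⟩
  have hSn : 2 + #{x | part x ≠ A} ≤ Fintype.card V := by
    have hAcard : A.ncard = #{x | part x = A} := by
      rw [← Set.ncard_coe_finset, coe_filter]
      simp only [mem_univ, true_and]
      rw [hclass A hA]
    have := card_filter_add_card_filter_not (s := univ) (fun x => part x = A)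
    simp only [← ne_eq, card_univ] at this
    omega
  have hedges := hT.card_edgeFinset
  have hcardP : #P = #(P.erase A) + 1 := (card_erase_add_one hA).symm
  rcases lt_or_ge #(P.erase A) 3 with hQ | hQ
  · omega
  · have := mul_card_le_card_edgeFinset hdom hc hQ
    omega

theorem card_le_of_isTree (hT : T.IsTree) (hn : 2 ≤ Fintype.card V)
    (hP : KCoalitionPartition T 2 P) : #P ≤ Fintype.card V / 2 + 1 := by
  classical
  have : Nontrivial V := Fintype.one_lt_card_iff_nontrivial.mp hn
  obtain ⟨v, w, hvw, hv, hw⟩ := hT.exists_ne_and_degree_eq_one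
  have hforced : ∀ u, T.degree u = 1 → ∀ S, KDominatingSet T 2 S → u ∈ S :=
    fun u hu S hS => hS.mem_of_degree_lt (by omega)
  obtain ⟨part, hpart⟩ := hP.exists_part
  have hmem : ∀ x, x ∈ part x := fun x => ((hpart x).2 _ (hpart x).1).2 rfl
  by_cases hwv : w ∈ part v
  · refine hP.card_le_of_isTree_of_two_le_ncard hT (hforced v hv) (hpart v).1 (hmem v) ?_
    exact (Set.one_lt_ncard (Set.toFinite _)).2 ⟨v, hmem v, w, hwv, hvw⟩
  · have hsub := hP.subset_pair_of_forall_mem (hforced v hv) (hforced w hw) (hpart v).1 (hmem v)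
      (hpart w).1 (hmem w) hwv
    have := (card_le_card hsub).trans (card_insert_le _ _)
    rw [card_singleton] at this
    omega

end KCoalitionPartition

theorem c2_tree_le {V : Type*} [Fintype V] (T : SimpleGraph V) (hT : T.IsTree)
    (hn : 2 ≤ Fintype.card V) :
    kCoalitionNumber T 2 ≤ Fintype.card V / 2 + 1 :=
  csSup_le' fun _ ⟨_, hP, hcard⟩ => hcard ▸ hP.card_le_of_isTree hT hn
end

section
/- For any finite simple graph G of order n ≥ 2 and any integer k ≥ Δ(G) + 1, the k-coalition number satisfies C_k(G) = 2, where Δ(G) is the maximum degree of G. -/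
open SimpleGraph

/-! When `k` exceeds every degree, no vertex outside a proper subset `S` can have `k` neighbours
in `S`, so the only `k`-dominating set is `V` itself. Hence in a `k`-coalition partition some part,
or the union of two parts, is all of `V`, which leaves room for at most two parts; conversely any
vertex `a` gives the `k`-coalition partition `{{a}, {a}ᶜ}` once `V` has a second vertex. -/

lemma Finset.subset_pair_of_union_eq_univ {α : Type*} {P : Finset (Set α)}
    (hne : ∀ C ∈ P, C.Nonempty) (hdisj : (P : Set (Set α)).PairwiseDisjoint id)
    {A B : Set α} (hA : A ∈ P) (hB : B ∈ P) (hAB : A ∪ B = Set.univ) : P ⊆ {A, B} := by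
  intro C hC
  by_contra hCAB
  simp only [Finset.mem_insert, Finset.mem_singleton, not_or] at hCAB
  obtain ⟨c, hc⟩ := hne C hC
  rcases hAB ▸ Set.mem_univ c with hcA | hcB
  · exact Set.disjoint_left.mp (hdisj hC hA hCAB.1) hc hcA
  · exact Set.disjoint_left.mp (hdisj hC hB hCAB.2) hc hcB

namespace SimpleGraph

variable {V : Type*} {G : SimpleGraph V} {k : ℕ}

lemma kDominatingSet_univ : KDominatingSet G k Set.univ :=
  fun v hv => absurd (Set.mem_univ v) hv

lemma KCoalition.symm {A B : Set V} (h : KCoalition G k A B) : KCoalition G k B A :=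
  ⟨h.1.symm, h.2.2.1, h.2.1, Set.union_comm A B ▸ h.2.2.2⟩

lemma KCoalition.kCoalitionPartition_pair {A B : Set V} (h : KCoalition G k A B)
    (hA : A.Nonempty) (hB : B.Nonempty) (hAB : A ∪ B = Set.univ) :
    KCoalitionPartition G k {A, B} := by
  have hne : A ≠ B := h.1.ne hA.ne_empty
  refine ⟨?_, ?_, ?_, ?_⟩
  · simpa using ⟨hA, hB⟩
  · rw [Finset.coe_pair]
    exact Set.pairwise_pair.mpr fun _ => ⟨h.1, h.1.symm⟩
  · simpa using hAB
  · simp only [Finset.mem_insert, Finset.mem_singleton]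
    rintro C (rfl | rfl)
    · exact .inr ⟨B, .inr rfl, hne.symm, h⟩
    · exact .inr ⟨A, .inl rfl, hne, h.symm⟩

section MaxDegreeLT

variable [Fintype V] [DecidableRel G.Adj]

lemma kDominatingSet_iff_eq_univ (hk : G.maxDegree < k) {S : Set V} :
    KDominatingSet G k S ↔ S = Set.univ := by
  refine ⟨fun hS => ?_, fun h => h ▸ kDominatingSet_univ⟩
  by_contra hne
  obtain ⟨v, hv⟩ := (Set.ne_univ_iff_exists_notMem S).mp hne
  have hdeg : (G.neighborSet v).ncard = G.degree v := by
    rw [← card_neighborFinset_eq_degree, ← Set.ncard_coe_finset, coe_neighborFinset]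
  have := calc
    k ≤ (S ∩ G.neighborSet v).ncard := hS v hv
    _ ≤ (G.neighborSet v).ncard := Set.ncard_le_ncard Set.inter_subset_right
    _ = G.degree v := hdeg
    _ ≤ G.maxDegree := G.degree_le_maxDegree v
  omega

lemma kCoalition_compl (hk : G.maxDegree < k) {A : Set V} (hA : A.Nonempty)
    (hAc : Aᶜ.Nonempty) : KCoalition G k A Aᶜ := by
  refine ⟨disjoint_compl_right, ?_, ?_, Set.union_compl_self A ▸ kDominatingSet_univ⟩
  · rw [kDominatingSet_iff_eq_univ hk, ← Set.compl_empty_iff]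
    exact hAc.ne_empty
  · rw [kDominatingSet_iff_eq_univ hk, Set.compl_univ_iff]
    exact hA.ne_empty

lemma KCoalitionPartition.card_le_two (hk : G.maxDegree < k) {P : Finset (Set V)}
    (hP : KCoalitionPartition G k P) : P.card ≤ 2 := by
  obtain ⟨hne, hdisj, -, hparts⟩ := hP
  obtain rfl | ⟨A, hA⟩ := P.eq_empty_or_nonempty
  · simp
  obtain ⟨B, hB, hAB⟩ : ∃ B ∈ P, A ∪ B = Set.univ := by
    rcases hparts A hA with ⟨hAdom, -⟩ | ⟨B, hB, -, -, -, -, hABdom⟩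
    · exact ⟨A, hA, (Set.union_self A).symm ▸ (kDominatingSet_iff_eq_univ hk).mp hAdom⟩
    · exact ⟨B, hB, (kDominatingSet_iff_eq_univ hk).mp hABdom⟩
  calc P.card ≤ ({A, B} : Finset (Set V)).card :=
        Finset.card_le_card (Finset.subset_pair_of_union_eq_univ hne hdisj hA hB hAB)
    _ ≤ 2 := Finset.card_le_two

end MaxDegreeLT

end SimpleGraph

open SimpleGraph in
theorem ck_eq_two_of_maxDegree_lt {V : Type*} [Fintype V] (G : SimpleGraph V)
    [DecidableRel G.Adj] (hn : 2 ≤ Fintype.card V) (k : ℕ)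
    (hk : G.maxDegree + 1 ≤ k) :
    kCoalitionNumber G k = 2 := by
  obtain ⟨a, b, hab⟩ := Fintype.exists_pair_of_one_lt_card hn
  have hbc : ({a}ᶜ : Set V).Nonempty := ⟨b, Ne.symm hab⟩
  have hpair : KCoalitionPartition G k {{a}, {a}ᶜ} :=
    (kCoalition_compl hk (Set.singleton_nonempty a) hbc).kCoalitionPartition_pair
      (Set.singleton_nonempty a) hbc (Set.union_compl_self _)
  have : Nonempty V := ⟨a⟩
  have hcard : ({{a}, {a}ᶜ} : Finset (Set V)).card = 2 := Finset.card_pair ne_compl_self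
  refine IsGreatest.csSup_eq ⟨⟨_, hpair, hcard⟩, ?_⟩
  rintro n ⟨P, hP, rfl⟩
  exact hP.card_le_two hk
end

section
/- Let s, t and k be positive integers with t ≥ s and k ≥ 2. If s < k, then the k-coalition number of the complete bipartite graph K_{s,t} satisfies C_k(K_{s,t}) = 2. -/
open SimpleGraph

private lemma nb_inl (s t : ℕ) (a : Fin s) :
    (completeBipartiteGraph (Fin s) (Fin t)).neighborSet (Sum.inl a) = Set.range Sum.inr := by
  ext v; cases v <;> simp [neighborSet]

private lemma nb_inr (s t : ℕ) (b : Fin t) :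
    (completeBipartiteGraph (Fin s) (Fin t)).neighborSet (Sum.inr b) = Set.range Sum.inl := by
  ext v; cases v <;> simp [neighborSet]

private lemma ncard_range_inl (s t : ℕ) :
    (Set.range (Sum.inl : Fin s → Fin s ⊕ Fin t)).ncard = s := by
  rw [← Nat.card_coe_set_eq, Nat.card_range_of_injective Sum.inl_injective,
    Nat.card_eq_fintype_card, Fintype.card_fin]

private lemma ncard_range_inr (s t : ℕ) :
    (Set.range (Sum.inr : Fin t → Fin s ⊕ Fin t)).ncard = t := by
  rw [← Nat.card_coe_set_eq, Nat.card_range_of_injective Sum.inr_injective,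
    Nat.card_eq_fintype_card, Fintype.card_fin]

/-- Any `k`-dominating set of `K_{s,t}` contains all right vertices when `s < k`. -/
private lemma dom_sup (s t k : ℕ) (hsk : s < k) (S : Set (Fin s ⊕ Fin t))
    (h : KDominatingSet (completeBipartiteGraph (Fin s) (Fin t)) k S) :
    Set.range Sum.inr ⊆ S := by
  rintro _ ⟨b, rfl⟩
  by_contra hb
  have h1 := h _ hb
  have h2 : S ∩ (completeBipartiteGraph (Fin s) (Fin t)).neighborSet (Sum.inr b)
      ⊆ Set.range (Sum.inl : Fin s → Fin s ⊕ Fin t) := by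
    rw [nb_inr]; exact Set.inter_subset_right
  have h3 := Set.ncard_le_ncard h2 (Set.toFinite _)
  rw [ncard_range_inl] at h3
  omega

private lemma dom_univ (s t k : ℕ) :
    KDominatingSet (completeBipartiteGraph (Fin s) (Fin t)) k Set.univ := by
  intro v hv; exact absurd (Set.mem_univ v) hv

/-- Lower bound: there is a `k`-coalition partition of `K_{s,t}` of size 2. -/
private lemma lower (s t k : ℕ) (hs : 0 < s) (hst : s ≤ t) (hk : 2 ≤ k) (hsk : s < k) :
    ∃ P : Finset (Set (Fin s ⊕ Fin t)),
      KCoalitionPartition (completeBipartiteGraph (Fin s) (Fin t)) k P ∧ P.card = 2 := by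
  classical
  have ht : 0 < t := lt_of_lt_of_le hs hst
  refine ⟨{Set.univ \ {Sum.inr ⟨0, ht⟩}, {Sum.inr ⟨0, ht⟩}}, ⟨?_, ?_, ?_, ?_⟩, ?_⟩
  case _ =>
    -- nonempty
    intro X hX
    rcases Finset.mem_insert.mp hX with rfl | hX
    · exact ⟨Sum.inl ⟨0, hs⟩, by simp⟩
    · rw [Finset.mem_singleton.mp hX]; exact ⟨Sum.inr ⟨0, ht⟩, rfl⟩
  case _ =>
    intro X hX Y hY hXY
    simp only [Finset.coe_insert, Finset.coe_singleton, Set.mem_insert_iff,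
      Set.mem_singleton_iff] at hX hY
    rcases hX with rfl | rfl <;> rcases hY with rfl | rfl <;>
      first
        | exact absurd rfl hXY
        | exact Set.disjoint_sdiff_left
        | exact Set.disjoint_sdiff_left.symm
  case _ =>
    simp only [Finset.mem_insert, Finset.mem_singleton]
    apply Set.eq_univ_of_univ_subset
    intro v _
    by_cases hv : v = Sum.inr ⟨0, ht⟩
    · exact Set.mem_biUnion (Or.inr rfl) (by simp [hv])
    · exact Set.mem_biUnion (Or.inl rfl) (by simp [hv])
  case _ =>
    have hAnd : ¬ KDominatingSet (completeBipartiteGraph (Fin s) (Fin t)) k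
        (Set.univ \ {Sum.inr ⟨0, ht⟩}) := by
      intro h
      have h1 := h (Sum.inr ⟨0, ht⟩) (by simp)
      have h2 : (Set.univ \ {Sum.inr ⟨0, ht⟩}) ∩
          (completeBipartiteGraph (Fin s) (Fin t)).neighborSet (Sum.inr ⟨0, ht⟩)
          ⊆ Set.range (Sum.inl : Fin s → Fin s ⊕ Fin t) := by
        rw [nb_inr]; exact Set.inter_subset_right
      have h3 := Set.ncard_le_ncard h2 (Set.toFinite _)
      rw [ncard_range_inl] at h3
      omega
    have hBnd : ¬ KDominatingSet (completeBipartiteGraph (Fin s) (Fin t)) k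
        ({Sum.inr ⟨0, ht⟩} : Set (Fin s ⊕ Fin t)) := by
      intro h
      have h1 := h (Sum.inl ⟨0, hs⟩) (by simp)
      have h3 := Set.ncard_le_ncard
        (Set.inter_subset_left (t := (completeBipartiteGraph (Fin s) (Fin t)).neighborSet
          (Sum.inl ⟨0, hs⟩)) (s := ({Sum.inr ⟨0, ht⟩} : Set (Fin s ⊕ Fin t))))
        (Set.toFinite _)
      rw [Set.ncard_singleton] at h3
      omega
    have hU : (Set.univ \ {Sum.inr ⟨0, ht⟩}) ∪ ({Sum.inr ⟨0, ht⟩} : Set (Fin s ⊕ Fin t))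
        = Set.univ := by
      rw [Set.diff_union_self]; simp
    have hne : (Set.univ \ {Sum.inr ⟨0, ht⟩}) ≠ ({Sum.inr ⟨0, ht⟩} : Set (Fin s ⊕ Fin t)) := by
      intro h
      have h1 : (Sum.inl ⟨0, hs⟩ : Fin s ⊕ Fin t) ∈ Set.univ \ {Sum.inr ⟨0, ht⟩} := by simp
      rw [h] at h1
      simp at h1
    intro X hX
    rcases Finset.mem_insert.mp hX with rfl | hX
    · exact Or.inr ⟨{Sum.inr ⟨0, ht⟩}, by simp, hne.symm,
        Set.disjoint_sdiff_left, hAnd, hBnd, by rw [hU]; exact dom_univ s t k⟩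
    · rw [Finset.mem_singleton.mp hX]
      refine Or.inr ⟨Set.univ \ {Sum.inr ⟨0, ht⟩}, by simp, hne,
        Set.disjoint_sdiff_left.symm, hBnd, hAnd, ?_⟩
      rw [Set.union_comm, hU]; exact dom_univ s t k
  case _ =>
    have hne : (Set.univ \ {Sum.inr ⟨0, ht⟩}) ≠ ({Sum.inr ⟨0, ht⟩} : Set (Fin s ⊕ Fin t)) := by
      intro h
      have h1 : (Sum.inl ⟨0, hs⟩ : Fin s ⊕ Fin t) ∈ Set.univ \ {Sum.inr ⟨0, ht⟩} := by simp
      rw [h] at h1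
      simp at h1
    rw [Finset.card_insert_of_notMem (by simpa using hne), Finset.card_singleton]

/-- Upper bound: every `k`-coalition partition of `K_{s,t}` has at most 2 parts. -/
private lemma upper (s t k : ℕ) (hs : 0 < s) (hst : s ≤ t) (hk : 2 ≤ k) (hsk : s < k)
    (P : Finset (Set (Fin s ⊕ Fin t)))
    (hP : KCoalitionPartition (completeBipartiteGraph (Fin s) (Fin t)) k P) :
    P.card ≤ 2 := by
  classical
  set G := completeBipartiteGraph (Fin s) (Fin t) with hG
  have ht : 0 < t := lt_of_lt_of_le hs hst
  by_contra hn
  push_neg at hn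
  obtain ⟨hPne, hPdisj, hPcov, hPcoal⟩ := hP
  have hdisj : ∀ X ∈ P, ∀ Y ∈ P, X ≠ Y → Disjoint X Y := fun X hX Y hY hXY =>
    hPdisj hX hY hXY
  -- no part is dominating
  have hnodom : ∀ X ∈ P, ¬ KDominatingSet G k X := by
    intro X hX hXd
    have hXR : Set.range Sum.inr ⊆ X := dom_sup s t k hsk X hXd
    -- another part
    obtain ⟨Y, hY, hYX⟩ : ∃ Y ∈ P, Y ≠ X := by
      by_contra hc
      push_neg at hc
      have : P ⊆ {X} := fun Z hZ => Finset.mem_singleton.mpr (hc Z hZ)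
      have := Finset.card_le_card this
      simp at this
      omega
    rcases hPcoal Y hY with ⟨hYd, _⟩ | ⟨B, hB, hBY, hBdisj, hYnd, hBnd, hYBd⟩
    · have hYR : Set.range Sum.inr ⊆ Y := dom_sup s t k hsk Y hYd
      exact Set.not_disjoint_iff.mpr ⟨Sum.inr ⟨0, ht⟩, hYR ⟨_, rfl⟩, hXR ⟨_, rfl⟩⟩
        (hdisj Y hY X hX hYX)
    · have hBX : B ≠ X := fun h => hBnd (h ▸ hXd)
      have hYBR : Set.range Sum.inr ⊆ Y ∪ B := dom_sup s t k hsk _ hYBd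
      rcases hYBR (⟨⟨0, ht⟩, rfl⟩ : (Sum.inr ⟨0, ht⟩ : Fin s ⊕ Fin t) ∈ Set.range Sum.inr)
        with h | h
      · exact Set.not_disjoint_iff.mpr ⟨_, h, hXR ⟨_, rfl⟩⟩ (hdisj Y hY X hX hYX)
      · exact Set.not_disjoint_iff.mpr ⟨_, h, hXR ⟨_, rfl⟩⟩ (hdisj B hB X hX hBX)
  -- pick a part X1 and its partner B1
  obtain ⟨X1, hX1⟩ := Finset.card_pos.mp (by omega : 0 < P.card)
  rcases hPcoal X1 hX1 with ⟨hd, _⟩ | ⟨B1, hB1, hB1X1, _, _, _, hU1d⟩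
  · exact hnodom X1 hX1 hd
  -- part C distinct from X1 and B1
  obtain ⟨C, hC, hCn⟩ : ∃ C ∈ P, C ∉ ({X1, B1} : Finset (Set (Fin s ⊕ Fin t))) := by
    by_contra hc
    push_neg at hc
    have h1 := Finset.card_le_card hc
    have h2 : ({X1, B1} : Finset (Set (Fin s ⊕ Fin t))).card ≤ 2 :=
      Finset.card_insert_le _ _ |>.trans (by simp)
    omega
  simp only [Finset.mem_insert, Finset.mem_singleton, not_or] at hCn
  obtain ⟨hCX1, hCB1⟩ := hCn
  -- C contains no right vertex
  have hCR : ∀ b : Fin t, Sum.inr b ∉ C := by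
    intro b hb
    rcases dom_sup s t k hsk _ hU1d ⟨b, rfl⟩ with h | h
    · exact Set.not_disjoint_iff.mpr ⟨_, hb, h⟩ (hdisj C hC X1 hX1 hCX1)
    · exact Set.not_disjoint_iff.mpr ⟨_, hb, h⟩ (hdisj C hC B1 hB1 hCB1)
  -- C's partner D contains all right vertices
  rcases hPcoal C hC with ⟨hd, _⟩ | ⟨D, hD, hDC, _, _, hDnd, hUDd⟩
  · exact hnodom C hC hd
  have hDR : Set.range Sum.inr ⊆ D := by
    rintro _ ⟨b, rfl⟩
    rcases dom_sup s t k hsk _ hUDd ⟨b, rfl⟩ with h | h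
    · exact absurd h (hCR b)
    · exact h
  -- D not dominating gives t < k
  have htk : t < k := by
    rw [KDominatingSet] at hDnd
    push_neg at hDnd
    obtain ⟨v, hv, hvk⟩ := hDnd
    match v with
    | Sum.inr b => exact absurd (hDR ⟨b, rfl⟩) hv
    | Sum.inl a =>
      have : D ∩ G.neighborSet (Sum.inl a) = Set.range Sum.inr := by
        rw [hG, nb_inl]
        exact Set.inter_eq_self_of_subset_right hDR
      rw [this, ncard_range_inr] at hvk
      omega
  -- C ∪ D = univ
  have hCDuniv : C ∪ D = Set.univ := by
    apply Set.eq_univ_of_forall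
    intro v
    match v with
    | Sum.inr b => exact Or.inr (hDR ⟨b, rfl⟩)
    | Sum.inl a =>
      by_contra hv
      have h1 := hUDd _ hv
      have h2 : (C ∪ D) ∩ G.neighborSet (Sum.inl a) ⊆ Set.range Sum.inr := by
        rw [hG, nb_inl]; exact Set.inter_subset_right
      have h3 := Set.ncard_le_ncard h2 (Set.toFinite _)
      rw [ncard_range_inr] at h3
      omega
  -- any part other than C and D must be empty: contradiction
  have key : ∀ W ∈ P, W ≠ C → W ≠ D → False := by
    intro W hW hWC hWD
    obtain ⟨w, hw⟩ := hPne W hW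
    have hw' : w ∈ C ∪ D := hCDuniv ▸ Set.mem_univ w
    rcases hw' with h | h
    · exact Set.not_disjoint_iff.mpr ⟨_, hw, h⟩ (hdisj W hW C hC hWC)
    · exact Set.not_disjoint_iff.mpr ⟨_, hw, h⟩ (hdisj W hW D hD hWD)
  by_cases hX1D : X1 = D
  · exact key B1 hB1 (Ne.symm hCB1) (fun h => hB1X1 (h.trans hX1D.symm))
  · exact key X1 hX1 (Ne.symm hCX1) hX1D

theorem ck_completeBipartite_of_lt (s t k : ℕ) (hs : 0 < s) (hst : s ≤ t) (hk : 2 ≤ k)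
    (hsk : s < k) :
    kCoalitionNumber (completeBipartiteGraph (Fin s) (Fin t)) k = 2 := by
  obtain ⟨P, hP, hP2⟩ := lower s t k hs hst hk hsk
  have h2mem : (2 : ℕ) ∈ {n | ∃ P : Finset (Set (Fin s ⊕ Fin t)),
      KCoalitionPartition (completeBipartiteGraph (Fin s) (Fin t)) k P ∧ P.card = n} :=
    ⟨P, hP, hP2⟩
  have hub : ∀ n ∈ {n | ∃ P : Finset (Set (Fin s ⊕ Fin t)),
      KCoalitionPartition (completeBipartiteGraph (Fin s) (Fin t)) k P ∧ P.card = n},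
      n ≤ 2 := by
    rintro n ⟨Q, hQ, rfl⟩
    exact upper s t k hs hst hk hsk Q hQ
  exact le_antisymm (csSup_le ⟨2, h2mem⟩ hub) (le_csSup ⟨2, hub⟩ h2mem)
end

section
/- Let s, t and k be positive integers with t ≥ s and k ≥ 2. If s = k, then the k-coalition number of the complete bipartite graph K_{s,t} satisfies C_k(K_{s,t}) = 4. -/
open SimpleGraph

/-! ### Auxiliary lemmas -/

/-- In a coalition partition where domination is "contains `X` or contains `Y`",
at most two parts can meet `X`. -/
lemma aux_le_two {V : Type*} {G : SimpleGraph V} {k : ℕ}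
    {P : Finset (Set V)} (hP : KCoalitionPartition G k P) (X Y : Set V)
    (hdom : ∀ S, KDominatingSet G k S ↔ X ⊆ S ∨ Y ⊆ S)
    (hXY : Disjoint X Y) (hY : Y.Nonempty)
    (hcard : ∀ S, KDominatingSet G k S → S.ncard = k → S = X ∨ S = Y)
    (Q : Finset (Set V)) (hQ : ∀ A ∈ Q, A ∈ P ∧ (A ∩ X).Nonempty) :
    Q.card ≤ 2 := by
  obtain ⟨hne, hdisj, hcover, hparts⟩ := hP
  by_contra hlt
  push_neg at hlt
  rw [Finset.two_lt_card_iff] at hlt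
  obtain ⟨x, y, z, hx', hy', hz', hxy, hxz, hyz⟩ := hlt
  obtain ⟨hx, hxX⟩ := hQ x hx'
  obtain ⟨hy, hyX⟩ := hQ y hy'
  obtain ⟨hz, hzX⟩ := hQ z hz'
  have hmeet : ∀ A ∈ P, ∀ B ∈ P, (A ∩ B).Nonempty → A = B := by
    rintro A hA B hB ⟨v, hvA, hvB⟩
    by_contra hne'
    exact Set.disjoint_left.mp (hdisj (Finset.mem_coe.mpr hA) (Finset.mem_coe.mpr hB) hne')
      hvA hvB
  have noX : ∀ A ∈ P, ¬ X ⊆ A := by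
    intro A hA hXA
    obtain ⟨v, hvx, hvX⟩ := hxX
    obtain ⟨w, hwy, hwX⟩ := hyX
    have h1 : x = A := hmeet x hx A hA ⟨v, hvx, hXA hvX⟩
    have h2 : y = A := hmeet y hy A hA ⟨w, hwy, hXA hwX⟩
    exact hxy (h1.trans h2.symm)
  have key : ∀ A ∈ P, (A ∩ X).Nonempty → ∃ B, ¬ KDominatingSet G k B ∧
      ∀ D ∈ P, (D ∩ Y).Nonempty → D = A ∨ D = B := by
    intro A hA hAX
    rcases hparts A hA with ⟨hd, hcd⟩ | ⟨B, hB, hBA, hdAB, hnA, hnB, hdU⟩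
    · rcases hcard A hd hcd with rfl | rfl
      · exact absurd subset_rfl (noX A hA)
      · obtain ⟨v, hv1, hv2⟩ := hAX
        exact (Set.disjoint_left.mp hXY hv2 hv1).elim
    · rcases (hdom _).mp hdU with hXs | hYs
      · exfalso
        have hin : ∀ C ∈ P, (C ∩ X).Nonempty → C = A ∨ C = B := by
          rintro C hC ⟨v, hvC, hvX⟩
          rcases hXs hvX with hvA | hvB
          · exact Or.inl (hmeet C hC A hA ⟨v, hvC, hvA⟩)
          · exact Or.inr (hmeet C hC B hB ⟨v, hvC, hvB⟩)
        rcases hin x hx hxX with h1|h1 <;> rcases hin y hy hyX with h2|h2 <;>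
          rcases hin z hz hzX with h3|h3
        · exact hxy (h1.trans h2.symm)
        · exact hxy (h1.trans h2.symm)
        · exact hxz (h1.trans h3.symm)
        · exact hyz (h2.trans h3.symm)
        · exact hyz (h2.trans h3.symm)
        · exact hxz (h1.trans h3.symm)
        · exact hxy (h1.trans h2.symm)
        · exact hxy (h1.trans h2.symm)
      · refine ⟨B, hnB, ?_⟩
        rintro D hD ⟨v, hvD, hvY⟩
        rcases hYs hvY with h|h
        · exact Or.inl (hmeet D hD A hA ⟨v, hvD, h⟩)
        · exact Or.inr (hmeet D hD B hB ⟨v, hvD, h⟩)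
  obtain ⟨v0, hv0Y⟩ := hY
  have hv0 : v0 ∈ ⋃ A ∈ P, A := by rw [hcover]; trivial
  obtain ⟨C, hC, hv0C⟩ := Set.mem_iUnion₂.mp hv0
  obtain ⟨Bx, hnBx, hPx⟩ := key x hx hxX
  obtain ⟨By, hnBy, hPy⟩ := key y hy hyX
  obtain ⟨Bz, hnBz, hPz⟩ := key z hz hzX
  by_cases hone : ∀ D ∈ P, (D ∩ Y).Nonempty → D = C
  · have hYC : Y ⊆ C := by
      intro v hv
      have hvm : v ∈ ⋃ A ∈ P, A := by rw [hcover]; trivial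
      obtain ⟨D, hD, hvD⟩ := Set.mem_iUnion₂.mp hvm
      rwa [← hone D hD ⟨v, hvD, hv⟩]
    have hdC : KDominatingSet G k C := (hdom C).mpr (Or.inr hYC)
    rcases hPx C hC ⟨v0, hv0C, hv0Y⟩ with h1|h1
    · rcases hPy C hC ⟨v0, hv0C, hv0Y⟩ with h2|h2
      · exact hxy (h1.symm.trans h2)
      · exact hnBy (h2 ▸ hdC)
    · exact hnBx (h1 ▸ hdC)
  · push_neg at hone
    obtain ⟨C', hC', hC'Y, hC'ne⟩ := hone
    have pair : ∀ (A Bb : Set V), (∀ D ∈ P, (D ∩ Y).Nonempty → D = A ∨ D = Bb) →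
        A = C ∨ A = C' := by
      intro A Bb hpr
      rcases hpr C hC ⟨v0, hv0C, hv0Y⟩ with h|h
      · exact Or.inl h.symm
      · rcases hpr C' hC' hC'Y with h'|h'
        · exact Or.inr h'.symm
        · exact absurd (h'.trans h.symm) hC'ne
    rcases pair x Bx hPx with h|h <;> rcases pair y By hPy with h'|h' <;>
      rcases pair z Bz hPz with h''|h''
    · exact hxy (h.trans h'.symm)
    · exact hxy (h.trans h'.symm)
    · exact hxz (h.trans h''.symm)
    · exact hyz (h'.trans h''.symm)
    · exact hyz (h'.trans h''.symm)
    · exact hxz (h.trans h''.symm)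
    · exact hxy (h.trans h'.symm)
    · exact hxy (h.trans h'.symm)

lemma nbl {k t : ℕ} (a : Fin k) :
    (completeBipartiteGraph (Fin k) (Fin t)).neighborSet (Sum.inl a) = Set.range Sum.inr := by
  ext w; cases w <;> simp [SimpleGraph.mem_neighborSet]

lemma nbr {k t : ℕ} (b : Fin t) :
    (completeBipartiteGraph (Fin k) (Fin t)).neighborSet (Sum.inr b) = Set.range Sum.inl := by
  ext w; cases w <;> simp [SimpleGraph.mem_neighborSet]

lemma ncardL (k t : ℕ) : (Set.range (Sum.inl : Fin k → Fin k ⊕ Fin t)).ncard = k := by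
  rw [← Set.image_univ, Set.ncard_image_of_injective _ Sum.inl_injective, Set.ncard_univ,
    Nat.card_eq_fintype_card, Fintype.card_fin]

lemma ncardR (k t : ℕ) : (Set.range (Sum.inr : Fin t → Fin k ⊕ Fin t)).ncard = t := by
  rw [← Set.image_univ, Set.ncard_image_of_injective _ Sum.inr_injective, Set.ncard_univ,
    Nat.card_eq_fintype_card, Fintype.card_fin]

lemma dom_iff {k t : ℕ} (hkt : k ≤ t) (S : Set (Fin k ⊕ Fin t)) :
    KDominatingSet (completeBipartiteGraph (Fin k) (Fin t)) k S ↔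
      Set.range Sum.inl ⊆ S ∨ Set.range Sum.inr ⊆ S := by
  constructor
  · intro h
    by_cases hR : Set.range Sum.inr ⊆ S
    · exact Or.inr hR
    · left
      obtain ⟨w, hwR, hwS⟩ := Set.not_subset.mp hR
      obtain ⟨b, rfl⟩ := hwR
      have h1 := h _ hwS
      rw [nbr] at h1
      have h2 : S ∩ Set.range Sum.inl = Set.range Sum.inl :=
        Set.eq_of_subset_of_ncard_le Set.inter_subset_right
          (by rw [ncardL]; exact h1) (Set.toFinite _)
      intro v hv
      have : v ∈ S ∩ Set.range Sum.inl := h2.symm ▸ hv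
      exact this.1
  · rintro (hL | hR) v hv
    · cases v with
      | inl a => exact absurd (hL ⟨a, rfl⟩) hv
      | inr b =>
        rw [nbr, Set.inter_eq_self_of_subset_right hL, ncardL]
    · cases v with
      | inl a =>
        rw [nbl, Set.inter_eq_self_of_subset_right hR, ncardR]
        exact hkt
      | inr b => exact absurd (hR ⟨b, rfl⟩) hv

lemma dom_card {k t : ℕ} (hkt : k ≤ t) (S : Set (Fin k ⊕ Fin t))
    (hd : KDominatingSet (completeBipartiteGraph (Fin k) (Fin t)) k S) (hc : S.ncard = k) :
    S = Set.range Sum.inl ∨ S = Set.range Sum.inr := by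
  rcases (dom_iff hkt S).mp hd with hL | hR
  · left
    exact (Set.eq_of_subset_of_ncard_le hL (by rw [hc, ncardL]) (Set.toFinite _)).symm
  · right
    exact (Set.eq_of_subset_of_ncard_le hR (by rw [hc, ncardR]; exact hkt) (Set.toFinite _)).symm

/-- The four parts of the explicit coalition partition. -/
def pA1 (k t : ℕ) (h : 0 < k) : Set (Fin k ⊕ Fin t) := {Sum.inl ⟨0, h⟩}
def pA2 (k t : ℕ) (h : 0 < k) : Set (Fin k ⊕ Fin t) := Sum.inl '' {a | a ≠ ⟨0, h⟩}
def pB1 (k t : ℕ) (h : 0 < t) : Set (Fin k ⊕ Fin t) := {Sum.inr ⟨0, h⟩}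
def pB2 (k t : ℕ) (h : 0 < t) : Set (Fin k ⊕ Fin t) := Sum.inr '' {b | b ≠ ⟨0, h⟩}

lemma upper_bound {k t : ℕ} (hk : 2 ≤ k) (hkt : k ≤ t)
    (P : Finset (Set (Fin k ⊕ Fin t)))
    (hP : KCoalitionPartition (completeBipartiteGraph (Fin k) (Fin t)) k P) :
    P.card ≤ 4 := by
  classical
  have hdisjLR : Disjoint (Set.range (Sum.inl : Fin k → Fin k ⊕ Fin t))
      (Set.range (Sum.inr : Fin t → Fin k ⊕ Fin t)) :=
    Set.isCompl_range_inl_range_inr.disjoint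
  have hLne : (Set.range (Sum.inl : Fin k → Fin k ⊕ Fin t)).Nonempty :=
    ⟨Sum.inl ⟨0, by omega⟩, ⟨_, rfl⟩⟩
  have hRne : (Set.range (Sum.inr : Fin t → Fin k ⊕ Fin t)).Nonempty :=
    ⟨Sum.inr ⟨0, by omega⟩, ⟨_, rfl⟩⟩
  have h1 := aux_le_two hP _ _ (dom_iff hkt) hdisjLR hRne (dom_card hkt)
    (P.filter fun A => (A ∩ Set.range Sum.inl).Nonempty)
    (fun A hA => Finset.mem_filter.mp hA)
  have h2 := aux_le_two hP _ _ (fun S => (dom_iff hkt S).trans or_comm) hdisjLR.symm hLne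
    (fun S hd hc => (dom_card hkt S hd hc).symm)
    (P.filter fun A => (A ∩ Set.range Sum.inr).Nonempty)
    (fun A hA => Finset.mem_filter.mp hA)
  have hsub : P ⊆ (P.filter fun A => (A ∩ Set.range Sum.inl).Nonempty) ∪
      (P.filter fun A => (A ∩ Set.range Sum.inr).Nonempty) := by
    intro A hA
    obtain ⟨v, hv⟩ := hP.1 A hA
    rw [Finset.mem_union, Finset.mem_filter, Finset.mem_filter]
    cases v with
    | inl a => exact Or.inl ⟨hA, ⟨Sum.inl a, hv, a, rfl⟩⟩
    | inr b => exact Or.inr ⟨hA, ⟨Sum.inr b, hv, b, rfl⟩⟩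
  calc P.card ≤ _ := Finset.card_le_card hsub
    _ ≤ _ + _ := Finset.card_union_le _ _
    _ ≤ 4 := by omega

lemma lower_bound {k t : ℕ} (hk : 2 ≤ k) (hkt : k ≤ t) :
    ∃ P : Finset (Set (Fin k ⊕ Fin t)),
      KCoalitionPartition (completeBipartiteGraph (Fin k) (Fin t)) k P ∧ P.card = 4 := by
  classical
  have h0k : 0 < k := by omega
  have h0t : 0 < t := by omega
  set A1 := pA1 k t h0k with hA1
  set A2 := pA2 k t h0k with hA2
  set B1 := pB1 k t h0t with hB1
  set B2 := pB2 k t h0t with hB2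
  -- distinctness
  have hmA1 : Sum.inl (⟨0, h0k⟩ : Fin k) ∈ A1 := by simp [hA1, pA1]
  have hmB1 : Sum.inr (⟨0, h0t⟩ : Fin t) ∈ B1 := by simp [hB1, pB1]
  have ne12 : A1 ≠ A2 := by
    intro h
    have := h ▸ hmA1
    simp [hA2, pA2] at this
  have ne13 : A1 ≠ B1 := by
    intro h
    have := h ▸ hmA1
    simp [hB1, pB1] at this
  have ne14 : A1 ≠ B2 := by
    intro h
    have := h ▸ hmA1
    simp [hB2, pB2] at this
  have ne23 : A2 ≠ B1 := by
    intro h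
    have := h.symm ▸ hmB1
    simp [hA2, pA2] at this
  have ne24 : A2 ≠ B2 := by
    intro h
    have hm : Sum.inl (⟨1, by omega⟩ : Fin k) ∈ A2 :=
      ⟨⟨1, by omega⟩, by simp [Fin.ext_iff], rfl⟩
    have := h ▸ hm
    simp [hB2, pB2] at this
  have ne34 : B1 ≠ B2 := by
    intro h
    have := h ▸ hmB1
    simp [hB2, pB2] at this
  -- disjointness
  have d12 : Disjoint A1 A2 := by
    rw [Set.disjoint_left]
    rintro v hv1 hv2
    simp [hA1, pA1] at hv1
    subst hv1
    simp [hA2, pA2] at hv2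
  have d13 : Disjoint A1 B1 := by
    rw [Set.disjoint_left]
    rintro v hv1 hv2
    simp [hA1, pA1] at hv1
    subst hv1
    simp [hB1, pB1] at hv2
  have d14 : Disjoint A1 B2 := by
    rw [Set.disjoint_left]
    rintro v hv1 hv2
    simp [hA1, pA1] at hv1
    subst hv1
    simp [hB2, pB2] at hv2
  have d23 : Disjoint A2 B1 := by
    rw [Set.disjoint_left]
    rintro v hv1 hv2
    simp [hB1, pB1] at hv2
    subst hv2
    simp [hA2, pA2] at hv1
  have d24 : Disjoint A2 B2 := by
    rw [Set.disjoint_left]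
    rintro v hv1 hv2
    obtain ⟨a, _, rfl⟩ := hv1
    simp [hB2, pB2] at hv2
  have d34 : Disjoint B1 B2 := by
    rw [Set.disjoint_left]
    rintro v hv1 hv2
    simp [hB1, pB1] at hv1
    subst hv1
    simp [hB2, pB2] at hv2
  -- non-domination of the parts
  have ndA1 : ¬ KDominatingSet (completeBipartiteGraph (Fin k) (Fin t)) k A1 := by
    rw [dom_iff hkt]
    rintro (h | h)
    · have := h ⟨(⟨1, by omega⟩ : Fin k), rfl⟩
      simp [hA1, pA1, Fin.ext_iff] at this
    · have := h ⟨(⟨0, h0t⟩ : Fin t), rfl⟩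
      simp [hA1, pA1] at this
  have ndA2 : ¬ KDominatingSet (completeBipartiteGraph (Fin k) (Fin t)) k A2 := by
    rw [dom_iff hkt]
    rintro (h | h)
    · have := h ⟨(⟨0, h0k⟩ : Fin k), rfl⟩
      simp [hA2, pA2] at this
    · have := h ⟨(⟨0, h0t⟩ : Fin t), rfl⟩
      simp [hA2, pA2] at this
  have ndB1 : ¬ KDominatingSet (completeBipartiteGraph (Fin k) (Fin t)) k B1 := by
    rw [dom_iff hkt]
    rintro (h | h)
    · have := h ⟨(⟨0, h0k⟩ : Fin k), rfl⟩
      simp [hB1, pB1] at this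
    · have := h ⟨(⟨1, by omega⟩ : Fin t), rfl⟩
      simp [hB1, pB1, Fin.ext_iff] at this
  have ndB2 : ¬ KDominatingSet (completeBipartiteGraph (Fin k) (Fin t)) k B2 := by
    rw [dom_iff hkt]
    rintro (h | h)
    · have := h ⟨(⟨0, h0k⟩ : Fin k), rfl⟩
      simp [hB2, pB2] at this
    · have := h ⟨(⟨0, h0t⟩ : Fin t), rfl⟩
      simp [hB2, pB2] at this
  -- domination of the unions
  have dA : KDominatingSet (completeBipartiteGraph (Fin k) (Fin t)) k (A1 ∪ A2) := by
    rw [dom_iff hkt]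
    left
    rintro v ⟨a, rfl⟩
    by_cases h : a = ⟨0, h0k⟩
    · exact Or.inl (by simp [hA1, pA1, h])
    · exact Or.inr ⟨a, h, rfl⟩
  have dB : KDominatingSet (completeBipartiteGraph (Fin k) (Fin t)) k (B1 ∪ B2) := by
    rw [dom_iff hkt]
    right
    rintro v ⟨b, rfl⟩
    by_cases h : b = ⟨0, h0t⟩
    · exact Or.inl (by simp [hB1, pB1, h])
    · exact Or.inr ⟨b, h, rfl⟩
  refine ⟨{A1, A2, B1, B2}, ⟨?_, ?_, ?_, ?_⟩, ?_⟩
  · -- nonempty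
    intro A hA
    simp only [Finset.mem_insert, Finset.mem_singleton] at hA
    rcases hA with rfl | rfl | rfl | rfl
    · exact ⟨_, hmA1⟩
    · exact ⟨Sum.inl (⟨1, by omega⟩ : Fin k), ⟨_, by simp [Fin.ext_iff], rfl⟩⟩
    · exact ⟨_, hmB1⟩
    · exact ⟨Sum.inr (⟨1, by omega⟩ : Fin t), ⟨_, by simp [Fin.ext_iff], rfl⟩⟩
  · -- pairwise disjoint
    intro A hA B hB hAB
    simp only [Finset.coe_insert, Set.mem_insert_iff, Finset.coe_singleton,
      Set.mem_singleton_iff] at hA hB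
    rcases hA with rfl | rfl | rfl | rfl <;> rcases hB with rfl | rfl | rfl | rfl <;>
      first
        | exact absurd rfl hAB
        | exact d12 | exact d13 | exact d14 | exact d23 | exact d24 | exact d34
        | exact d12.symm | exact d13.symm | exact d14.symm | exact d23.symm
        | exact d24.symm | exact d34.symm
  · -- covers
    apply Set.eq_univ_of_forall
    intro v
    rw [Set.mem_iUnion₂]
    match v with
    | Sum.inl a =>
      by_cases h : a = ⟨0, h0k⟩
      · exact ⟨A1, by simp, by simp [hA1, pA1, h]⟩
      · exact ⟨A2, by simp, ⟨a, h, rfl⟩⟩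
    | Sum.inr b =>
      by_cases h : b = ⟨0, h0t⟩
      · exact ⟨B1, by simp, by simp [hB1, pB1, h]⟩
      · exact ⟨B2, by simp, ⟨b, h, rfl⟩⟩
  · -- every part is in a coalition
    intro A hA
    simp only [Finset.mem_insert, Finset.mem_singleton] at hA
    rcases hA with rfl | rfl | rfl | rfl
    · exact Or.inr ⟨A2, by simp, ne12.symm, d12, ndA1, ndA2, dA⟩
    · exact Or.inr ⟨A1, by simp, ne12, d12.symm, ndA2, ndA1, Set.union_comm A1 A2 ▸ dA⟩
    · exact Or.inr ⟨B2, by simp, ne34.symm, d34, ndB1, ndB2, dB⟩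
    · exact Or.inr ⟨B1, by simp, ne34, d34.symm, ndB2, ndB1, Set.union_comm B1 B2 ▸ dB⟩
  · -- cardinality 4
    rw [Finset.card_insert_of_notMem (by simp [ne12, ne13, ne14]),
      Finset.card_insert_of_notMem (by simp [ne23, ne24]),
      Finset.card_insert_of_notMem (by simp [ne34]), Finset.card_singleton]

lemma main_aux (k t : ℕ) (hk : 2 ≤ k) (hkt : k ≤ t) :
    kCoalitionNumber (completeBipartiteGraph (Fin k) (Fin t)) k = 4 := by
  obtain ⟨P4, hP4, hc4⟩ := lower_bound hk hkt
  have hbdd : ∀ n ∈ {n | ∃ P : Finset (Set (Fin k ⊕ Fin t)),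
      KCoalitionPartition (completeBipartiteGraph (Fin k) (Fin t)) k P ∧ P.card = n},
      n ≤ 4 := by
    rintro n ⟨P, hP, rfl⟩
    exact upper_bound hk hkt P hP
  apply le_antisymm
  · exact csSup_le ⟨4, P4, hP4, hc4⟩ hbdd
  · exact le_csSup ⟨4, hbdd⟩ ⟨P4, hP4, hc4⟩

theorem ck_completeBipartite_of_eq (s t k : ℕ) (hs : 0 < s) (hst : s ≤ t) (hk : 2 ≤ k)
    (hsk : s = k) :
    kCoalitionNumber (completeBipartiteGraph (Fin s) (Fin t)) k = 4 := by
  subst hsk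
  exact main_aux s t hk hst
end
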